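/- Let d ≥ 1 be a natural number and let r > 0, ρ ≥ 0, t > 0, k > 0, N > 0, ε > 0 be real numbers. Let X₁, …, X_d and Y be real-valued random variables on a probability space such that for each i, X_i and Y are independent, each of X₁, …, X_d and Y has mean 0 and variance 2·((d·r+1)·t/ε)² (the variance of Laplace noise with scale (d·r+1)·t/ε), and all are square-integrable. Set C = N/k and S_i = 2·ρ·r·C for each i. Then ∑_{i=1}^{d} E[((C·X_i − S_i·Y)/C²)²] = 2·d·(1+(2·ρ·r)²)·(k·t·(d·r+1)/(N·ε))². -/

import Mathlib

open MeasureTheory ProbabilityTheory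

lemma integral_sq_sub_eq_of_indepFun {Ω : Type*} [MeasurableSpace Ω] {μ : Measure Ω}
    [IsFiniteMeasure μ] {X Y : Ω → ℝ} (hindep : IndepFun X Y μ)
    (hX : MemLp X 2 μ) (hY : MemLp Y 2 μ) (hXmean : ∫ ω, X ω ∂μ = 0)
    (hYmean : ∫ ω, Y ω ∂μ = 0) (a b : ℝ) :
    ∫ ω, (a * X ω - b * Y ω) ^ 2 ∂μ = a ^ 2 * variance X μ + b ^ 2 * variance Y μ := by
  have hmean : ∫ ω, (a * X ω - b * Y ω) ∂μ = 0 := by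
    rw [integral_sub ((hX.integrable one_le_two).const_mul a)
      ((hY.integrable one_le_two).const_mul b), integral_const_mul, integral_const_mul,
      hXmean, hYmean]
    ring
  rw [← variance_of_integral_eq_zero (X := fun ω ↦ a * X ω - b * Y ω)
      ((hX.aemeasurable.const_mul a).sub (hY.aemeasurable.const_mul b)) hmean,
    variance_fun_sub (hX.const_mul a) (hY.const_mul b), covariance_const_mul_left,
    covariance_const_mul_right, hindep.covariance_eq_zero hX hY, variance_const_mul,
    variance_const_mul]
  ring

theorem dplloyd_mse_exact_general
    {Ω : Type*} [MeasurableSpace Ω] (μ : Measure Ω) [IsProbabilityMeasure μ]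
    (d : ℕ) (r ρ t k N ε : ℝ)
    (hk : 0 < k) (hN : 0 < N)
    (X : Fin d → Ω → ℝ) (Y : Ω → ℝ)
    (hindep : ∀ i, IndepFun (X i) Y μ)
    (hXmean : ∀ i, ∫ ω, X i ω ∂μ = 0) (hYmean : ∫ ω, Y ω ∂μ = 0)
    (hXvar : ∀ i, variance (X i) μ = 2 * (((d : ℝ) * r + 1) * t / ε) ^ 2)
    (hYvar : variance Y μ = 2 * (((d : ℝ) * r + 1) * t / ε) ^ 2)
    (hXsq : ∀ i, MemLp (X i) 2 μ) (hYsq : MemLp Y 2 μ)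
    (C : ℝ) (hC : C = N / k) (S : Fin d → ℝ) (hS : ∀ i, S i = 2 * ρ * r * C) :
    ∑ i : Fin d, ∫ ω, ((C * X i ω - S i * Y ω) / C ^ 2) ^ 2 ∂μ
      = 2 * (d : ℝ) * (1 + (2 * ρ * r) ^ 2)
        * (k * t * ((d : ℝ) * r + 1) / (N * ε)) ^ 2 := by
  have hC0 : C ≠ 0 := hC ▸ div_ne_zero hN.ne' hk.ne'
  have hterm : ∀ i, ∫ ω, ((C * X i ω - S i * Y ω) / C ^ 2) ^ 2 ∂μ
      = (1 + (2 * ρ * r) ^ 2) * 2 * (((d : ℝ) * r + 1) * t / ε) ^ 2 / C ^ 2 := by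
    intro i
    have hsplit : ∀ ω, ((C * X i ω - S i * Y ω) / C ^ 2) ^ 2
        = (C⁻¹ * X i ω - (2 * ρ * r / C) * Y ω) ^ 2 := fun ω ↦ by
      rw [hS i]
      field_simp
    simp_rw [hsplit, integral_sq_sub_eq_of_indepFun (hindep i) (hXsq i) hYsq (hXmean i) hYmean,
      hXvar i, hYvar]
    field_simp
  simp_rw [hterm, Finset.sum_const, Finset.card_univ, Fintype.card_fin, nsmul_eq_mul, hC]
  field_simp

/-- Exact computation underlying Proposition 1 (MSE of one DPLloyd iteration). -/
theorem dplloyd_mse_exact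
    {Ω : Type*} [MeasurableSpace Ω] (μ : Measure Ω) [IsProbabilityMeasure μ]
    (d : ℕ) (hd : 1 ≤ d) (r ρ t k N ε : ℝ)
    (hr : 0 < r) (hρ : 0 ≤ ρ) (ht : 0 < t) (hk : 0 < k) (hN : 0 < N) (hε : 0 < ε)
    (X : Fin d → Ω → ℝ) (Y : Ω → ℝ)
    (hindep : ∀ i, IndepFun (X i) Y μ)
    (hXmean : ∀ i, ∫ ω, X i ω ∂μ = 0) (hYmean : ∫ ω, Y ω ∂μ = 0)
    (hXvar : ∀ i, variance (X i) μ = 2 * (((d : ℝ) * r + 1) * t / ε) ^ 2)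
    (hYvar : variance Y μ = 2 * (((d : ℝ) * r + 1) * t / ε) ^ 2)
    (hXsq : ∀ i, MemLp (X i) 2 μ) (hYsq : MemLp Y 2 μ)
    (C : ℝ) (hC : C = N / k) (S : Fin d → ℝ) (hS : ∀ i, S i = 2 * ρ * r * C) :
    ∑ i : Fin d, ∫ ω, ((C * X i ω - S i * Y ω) / C ^ 2) ^ 2 ∂μ
      = 2 * (d : ℝ) * (1 + (2 * ρ * r) ^ 2)
        * (k * t * ((d : ℝ) * r + 1) / (N * ε)) ^ 2 :=
  dplloyd_mse_exact_general μ d r ρ t k N ε hk hN X Y hindep hXmean hYmean hXvar hYvar hXsq hYsq C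
    hC S hS
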